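/- arXiv:0811.3418 — 2 statements merged into one kernel-verified Lean document; each statement's English description precedes it below -/
import Mathlib

section
/- Let k be a field of characteristic zero and let h be a nonzero irreducible formal power series in k[[x_1,...,x_n]] that is not a unit. Then h does not divide all of its partial derivatives; i.e., there exists some i with 1 ≤ i ≤ n such that h does not divide ∂h/∂x_i. -/
open MvPowerSeries

/-- Formal partial derivative of a multivariate power series with respect to `x i`. -/
noncomputable def pderiv {n : ℕ} {k : Type} [CommRing k] (i : Fin n)
    (f : MvPowerSeries (Fin n) k) : MvPowerSeries (Fin n) k :=
  fun m => (m i + 1 : ℕ) • f (m + Finsupp.single i 1)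

/-- The gradient ideal of `f`: generated by all partial derivatives of `f`. -/
noncomputable def gradIdeal {n : ℕ} {k : Type} [CommRing k]
    (f : MvPowerSeries (Fin n) k) : Ideal (MvPowerSeries (Fin n) k) :=
  Ideal.span (Set.range fun i => pderiv i f)

/-- The Jacobian ideal of `f`: generated by `f` and all its partial derivatives. -/
noncomputable def jacIdeal {n : ℕ} {k : Type} [CommRing k]
    (f : MvPowerSeries (Fin n) k) : Ideal (MvPowerSeries (Fin n) k) :=
  Ideal.span (insert f (Set.range fun i => pderiv i f))

/-- A commutative ring is a regular local ring if it is local and its maximal ideal can be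
generated by as many elements as its Krull dimension. -/
def IsRegularLocal (R : Type) [CommRing R] : Prop :=
  ∃ _ : IsLocalRing R, ∃ s : Finset R,
    Ideal.span (s : Set R) = IsLocalRing.maximalIdeal R ∧
    (s.card : WithBot ℕ∞) = ringKrullDim R

/-!
A nonunit `h ≠ 0` has order `d ≥ 1`. Differentiating a degree-`d` monomial of `h` along a
variable occurring in it gives a nonzero coefficient (characteristic zero) of degree `d - 1`
in `∂h/∂xᵢ`, whereas every multiple of `h` has order at least `d`.
-/

theorem pderiv_eq_mvPowerSeries_pderiv {n : ℕ} {k : Type} [CommRing k] (i : Fin n)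
    (f : MvPowerSeries (Fin n) k) : pderiv i f = MvPowerSeries.pderiv k i f := by
  ext m
  rw [MvPowerSeries.coeff_pderiv, mul_comm, ← Nat.cast_succ, ← nsmul_eq_mul]
  rfl

namespace MvPowerSeries

variable {σ R : Type*}

theorem order_le_order_of_dvd [CommSemiring R] {f g : MvPowerSeries σ R} (hfg : f ∣ g) :
    f.order ≤ g.order := by
  obtain ⟨c, rfl⟩ := hfg
  exact le_self_add.trans le_order_mul

theorem exists_order_pderiv_lt [CommSemiring R] [NoZeroDivisors R] [CharZero R]
    {f : MvPowerSeries σ R} (hf : f ≠ 0) (hf₀ : constantCoeff f = 0) :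
    ∃ i, (pderiv R i f).order < f.order := by
  classical
  obtain ⟨d, hd, hdeg⟩ := exists_coeff_ne_zero_and_order (ne_zero_iff_order_finite.mp hf)
  have hd₀ : d ≠ 0 := by
    rintro rfl
    exact hd (by rwa [coeff_zero_eq_constantCoeff_apply])
  obtain ⟨i, hi⟩ := Finsupp.support_nonempty_iff.mpr hd₀
  set e := d - Finsupp.single i 1
  have he : e + Finsupp.single i 1 = d :=
    tsub_add_cancel_of_le (Finsupp.single_le_iff.mpr (Nat.one_le_iff_ne_zero.mpr
      (Finsupp.mem_support_iff.mp hi)))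
  have hcoeff : coeff e (pderiv R i f) ≠ 0 := by
    rw [coeff_pderiv, he]
    exact mul_ne_zero hd (Nat.cast_add_one_ne_zero _)
  refine ⟨i, (order_le hcoeff).trans_lt ?_⟩
  rw [← hdeg, ← he, map_add, Finsupp.degree_single]
  exact_mod_cast Nat.lt_succ_self _

end MvPowerSeries

theorem stmt_0_general {k : Type} [Field k] [CharZero k] {n : ℕ}
    (h : MvPowerSeries (Fin n) k) (h0 : h ≠ 0)
    (hnu : ¬ IsUnit h) :
    ∃ i : Fin n, ¬ h ∣ pderiv i h := by
  have h₀ : constantCoeff h = 0 := by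
    by_contra hc
    exact hnu (isUnit_iff_constantCoeff.mpr (isUnit_iff_ne_zero.mpr hc))
  obtain ⟨i, hi⟩ := exists_order_pderiv_lt h0 h₀
  refine ⟨i, fun hdvd => hi.not_ge ?_⟩
  rw [← pderiv_eq_mvPowerSeries_pderiv]
  exact order_le_order_of_dvd hdvd

theorem stmt_0 {k : Type} [Field k] [CharZero k] {n : ℕ}
    (h : MvPowerSeries (Fin n) k) (h0 : h ≠ 0) (hirr : Irreducible h)
    (hnu : ¬ IsUnit h) :
    ∃ i : Fin n, ¬ h ∣ pderiv i h :=
  stmt_0_general h h0 hnu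
end

section
/- Let k be a field of characteristic zero and f ∈ k[[x_1,...,x_n]] a non-unit whose gradient ideal I_{∇f} = (∂f/∂x_1, ..., ∂f/∂x_n) is principal, generated by ∂f/∂x_1 ≠ 0. Then f ∈ (∂f/∂x_1). -/
open MvPowerSeries

/-!
If `∂ᵢf = qᵢ ∂₀f` for all `i`, then `f` is annihilated by the vector fields `∂ᵢ - qᵢ ∂₀`
(`i ≠ 0`), and since `∂₀f ≠ 0` the symmetry of second derivatives makes these fields commute.
Commuting fields have formal first integrals with arbitrary prescribed restriction to the
`x₀`-axis, and such solutions are unique. Let `φ` be the first integral restricting to `x₀`;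
then `∂₀φ` is a unit. The restriction `F` of `f` to the axis is a one-variable series without
constant term, so `F = F' r`; if `ψ` is the first integral restricting to `r`, then
`∂₀f · ψ - f · ∂₀φ` solves a homogeneous linear system of the same kind and vanishes on the axis,
hence is zero. Thus `f = ∂₀f · ψ · (∂₀φ)⁻¹`.
-/

theorem Finsupp.exists_add_single_of_add_single_eq {σ : Type*} {m m'' : σ →₀ ℕ} {i j : σ}
    (h : m + single i 1 = m'' + single j 1) (hij : i ≠ j) :
    ∃ m', m = m' + single j 1 ∧ m'' = m' + single i 1 := by
  have hmj : m j ≠ 0 := by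
    have := DFunLike.congr_fun h j
    simp only [add_apply, single_eq_same, single_eq_of_ne hij.symm] at this
    omega
  refine ⟨m - single j 1, (sub_add_single_one_cancel hmj).symm, ?_⟩
  rw [← add_left_inj (single j 1), ← h, add_right_comm, sub_add_single_one_cancel hmj]

theorem PowerSeries.derivative_dvd_of_constantCoeff_eq_zero {k : Type*} [Field k] [CharZero k]
    {F : PowerSeries k} (hF : constantCoeff F = 0) : derivative k F ∣ F := by
  rcases eq_or_ne F 0 with rfl | hF0
  · simp
  obtain ⟨b, hb⟩ : ∃ b, F.order.toNat = b + 1 := Nat.exists_eq_add_one.mpr <|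
    Nat.pos_of_ne_zero <| by
      simpa [ENat.toNat_eq_zero, order_eq_top, hF0] using order_ne_zero_iff_constCoeff_eq_zero.mpr hF
  set u := F.divXPowOrder
  have hFu : X ^ (b + 1) * u = F := hb ▸ X_pow_order_mul_divXPowOrder
  have hW : IsUnit (X * derivative k u + (b + 1 : PowerSeries k) * u) := by
    refine isUnit_iff_constantCoeff.mpr (isUnit_iff_ne_zero.mpr ?_)
    have hu : constantCoeff u ≠ 0 := constantCoeff_divXPowOrder_eq_zero_iff.not.mpr hF0
    simpa [Nat.cast_add_one_ne_zero] using hu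
  have hF' : derivative k F = X ^ b * (X * derivative k u + (b + 1 : PowerSeries k) * u) := by
    rw [← hFu, Derivation.leibniz, derivative_pow, derivative_X, smul_eq_mul, smul_eq_mul,
      add_tsub_cancel_right]
    push_cast
    ring
  rw [hF', ← hFu, pow_succ, mul_assoc]
  exact mul_dvd_mul_left _ hW.dvd

namespace MvPowerSeries

open Finsupp (single weight)

variable {σ k : Type*}

theorem pderiv_comm [CommSemiring k] (i j : σ) (f : MvPowerSeries σ k) :
    pderiv k i (pderiv k j f) = pderiv k j (pderiv k i f) := by
  ext m
  rcases eq_or_ne i j with rfl | hij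
  · rfl
  · simp only [coeff_pderiv, Finsupp.add_apply, Finsupp.single_eq_of_ne hij,
      Finsupp.single_eq_of_ne hij.symm, add_zero, add_right_comm m]
    ring

theorem pderiv_mul [CommSemiring k] (i : σ) (f g : MvPowerSeries σ k) :
    pderiv k i (f * g) = pderiv k i f * g + f * pderiv k i g := by
  rw [Derivation.leibniz, smul_eq_mul, smul_eq_mul]
  ring

theorem eq_zero_of_forall_natCast_le_weightedOrder [Semiring k] (w : σ → ℕ)
    {G : MvPowerSeries σ k} (h : ∀ N : ℕ, (N : ℕ∞) ≤ weightedOrder w G) : G = 0 :=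
  (weightedOrder_eq_top_iff w).mp (top_le_iff.mp (ENat.forall_natCast_le_iff_le.mp fun N _ => h N))

section AxisRestrict

variable [CommSemiring k]

noncomputable def axisRestrict (a : σ) : MvPowerSeries σ k →ₐ[k] PowerSeries k :=
  killCompl (Function.Embedding.punit a)

variable {a : σ}

theorem coeff_axisRestrict (G : MvPowerSeries σ k) (t : ℕ) :
    PowerSeries.coeff t (axisRestrict a G) = coeff (single a t) G := by
  rw [PowerSeries.coeff, axisRestrict, coeff_killCompl, Finsupp.embDomain_single]
  rfl

theorem constantCoeff_axisRestrict (G : MvPowerSeries σ k) :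
    PowerSeries.constantCoeff (axisRestrict a G) = constantCoeff G := by
  rw [← PowerSeries.coeff_zero_eq_constantCoeff_apply, coeff_axisRestrict, Finsupp.single_zero,
    coeff_zero_eq_constantCoeff_apply]

theorem axisRestrict_pderiv_self (G : MvPowerSeries σ k) :
    axisRestrict a (pderiv k a G) = PowerSeries.derivative k (axisRestrict a G) := by
  ext t
  rw [PowerSeries.coeff_derivative, coeff_axisRestrict, coeff_axisRestrict, coeff_pderiv,
    ← Finsupp.single_add]
  simp

end AxisRestrict

section FirstIntegral

variable (a : σ)

def IsFirstIntegral [CommSemiring k] (q : σ → MvPowerSeries σ k) (G : MvPowerSeries σ k) :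
    Prop :=
  ∀ i ≠ a, pderiv k i G = q i * pderiv k a G

/-- The vector fields `∂ᵢ - qᵢ ∂ₐ` (`i ≠ a`) commute. -/
def IsInvolutive [CommSemiring k] (q : σ → MvPowerSeries σ k) : Prop :=
  ∀ i j, i ≠ a → j ≠ a →
    pderiv k j (q i) + q i * pderiv k a (q j) = pderiv k i (q j) + q j * pderiv k a (q i)

variable {a}

theorem IsFirstIntegral.pderiv_pderiv_self [CommSemiring k] {q : σ → MvPowerSeries σ k}
    {G : MvPowerSeries σ k} (hG : IsFirstIntegral a q G) {i : σ} (hi : i ≠ a) :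
    pderiv k i (pderiv k a G) =
      q i * pderiv k a (pderiv k a G) + pderiv k a (q i) * pderiv k a G := by
  rw [pderiv_comm, hG i hi, pderiv_mul]
  ring

theorem IsFirstIntegral.isInvolutive [CommRing k] [NoZeroDivisors k]
    {q : σ → MvPowerSeries σ k} {G : MvPowerSeries σ k} (hG : IsFirstIntegral a q G)
    (hG₀ : pderiv k a G ≠ 0) : IsInvolutive a q := by
  intro i j hi hj
  have hij := pderiv_comm (k := k) j i G
  rw [hG i hi, hG j hj, pderiv_mul, pderiv_mul, hG.pderiv_pderiv_self hi,
    hG.pderiv_pderiv_self hj] at hij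
  have : (pderiv k j (q i) + q i * pderiv k a (q j) -
      (pderiv k i (q j) + q j * pderiv k a (q i))) * pderiv k a G = 0 := by
    linear_combination hij
  exact sub_eq_zero.mp ((mul_eq_zero.mp this).resolve_right hG₀)

end FirstIntegral

section TransverseWeight

variable [DecidableEq σ]

def transverseWeight (a : σ) : σ → ℕ := fun j => if j = a then 0 else 1

variable {a : σ}

@[simp]
theorem weight_transverseWeight_single_self (t : ℕ) :
    weight (transverseWeight a) (single a t) = 0 := by
  simp [Finsupp.weight_single, transverseWeight]

@[simp]
theorem weight_transverseWeight_single_of_ne {i : σ} (hi : i ≠ a) :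
    weight (transverseWeight a) (single i 1) = 1 := by
  simp [Finsupp.weight_single, transverseWeight, hi]

theorem weight_transverseWeight_lt_of_eq_add_single {m m' : σ →₀ ℕ} {i : σ} (hi : i ≠ a)
    (hm : m = m' + single i 1) :
    weight (transverseWeight a) m' < weight (transverseWeight a) m := by
  simp [hm, hi]

theorem eq_single_of_weight_transverseWeight_eq_zero {m : σ →₀ ℕ}
    (h : weight (transverseWeight a) m = 0) : m = single a (m a) := by
  ext j
  rcases eq_or_ne j a with rfl | hj
  · simp
  · rw [Finsupp.weight_apply, Finsupp.sum, Finset.sum_eq_zero_iff] at h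
    rw [Finsupp.single_eq_of_ne hj]
    by_contra hmj
    simpa [transverseWeight, hj, hmj] using h j (Finsupp.mem_support_iff.mpr hmj)

theorem exists_apply_ne_zero_of_weight_transverseWeight_ne_zero {m : σ →₀ ℕ}
    (h : weight (transverseWeight a) m ≠ 0) : ∃ i, i ≠ a ∧ m i ≠ 0 := by
  by_contra! hm
  refine h (Finset.sum_eq_zero fun j _ => ?_)
  rcases eq_or_ne j a with rfl | hj
  · simp [transverseWeight]
  · simp [hm j hj]

theorem weightedOrder_le_weightedOrder_pderiv_self [CommSemiring k] (G : MvPowerSeries σ k) :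
    weightedOrder (transverseWeight a) G ≤ weightedOrder (transverseWeight a) (pderiv k a G) := by
  refine le_weightedOrder _ fun d hd => ?_
  rw [coeff_pderiv, coeff_eq_zero_of_lt_weightedOrder (transverseWeight a) (by simpa using hd),
    zero_mul]

theorem weightedOrder_le_weightedOrder_mul_pderiv_self [CommSemiring k]
    (A G : MvPowerSeries σ k) :
    weightedOrder (transverseWeight a) G ≤
      weightedOrder (transverseWeight a) (A * pderiv k a G) :=
  (weightedOrder_le_weightedOrder_pderiv_self G).trans
    (le_add_self.trans (le_weightedOrder_mul _))

/-- The equation for `∂ᵢG` expresses each coefficient of `G` off the axis through coefficients of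
smaller transverse weight. -/
theorem eq_zero_of_axisRestrict_eq_zero [CommRing k] [NoZeroDivisors k] [CharZero k]
    {A B : σ → MvPowerSeries σ k} {G : MvPowerSeries σ k}
    (hG : ∀ i ≠ a, pderiv k i G = A i * pderiv k a G + B i * G) (h₀ : axisRestrict a G = 0) :
    G = 0 := by
  refine eq_zero_of_forall_natCast_le_weightedOrder (transverseWeight a) fun N => ?_
  induction N with
  | zero => simp
  | succ N ih =>
    refine nat_le_weightedOrder _ fun m hm => ?_
    rcases Nat.lt_succ_iff_lt_or_eq.mp hm with hlt | hmN
    · exact coeff_eq_zero_of_lt_weightedOrder _ ((Nat.cast_lt.mpr hlt).trans_le ih)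
    rcases eq_or_ne N 0 with rfl | hN
    · rw [eq_single_of_weight_transverseWeight_eq_zero hmN, ← coeff_axisRestrict, h₀, map_zero]
    obtain ⟨i, hi, hmi⟩ := exists_apply_ne_zero_of_weight_transverseWeight_ne_zero (hmN ▸ hN)
    have hm := (Finsupp.sub_add_single_one_cancel hmi).symm
    have hGi : coeff (m - single i 1) (pderiv k i G) = 0 := by
      refine coeff_eq_zero_of_lt_weightedOrder (transverseWeight a) ?_
      rw [hG i hi]
      calc (weight (transverseWeight a) (m - single i 1) : ℕ∞)
          < N := Nat.cast_lt.mpr (hmN ▸ weight_transverseWeight_lt_of_eq_add_single hi hm)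
        _ ≤ weightedOrder (transverseWeight a) G := ih
        _ ≤ min (weightedOrder (transverseWeight a) (A i * pderiv k a G))
              (weightedOrder (transverseWeight a) (B i * G)) :=
          le_min (weightedOrder_le_weightedOrder_mul_pderiv_self _ _)
            (le_add_self.trans (le_weightedOrder_mul _))
        _ ≤ _ := min_weightedOrder_le_add _
    rw [coeff_pderiv, ← hm] at hGi
    exact (mul_eq_zero.mp hGi).resolve_right (Nat.cast_add_one_ne_zero _)

end TransverseWeight

section Existence

variable [DecidableEq σ] [Field k] (a : σ)

/-- Off the axis, the equation for `∂ᵢ`, for some `i ≠ a` occurring in `m`, gives the coefficient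
at `m` through coefficients of smaller transverse weight (the truncated series only makes this
recursion visibly well-founded). When `q` is involutive, the result is the first integral
restricting to `Q` on the `xₐ`-axis. -/
noncomputable def firstIntegral (q : σ → MvPowerSeries σ k) (Q : PowerSeries k) :
    MvPowerSeries σ k := fun m =>
  if h : weight (transverseWeight a) m = 0 then PowerSeries.coeff (m a) Q
  else
    let i := (exists_apply_ne_zero_of_weight_transverseWeight_ne_zero h).choose
    coeff (m - single i 1) (q i * pderiv k a fun v =>
      if weight (transverseWeight a) v < weight (transverseWeight a) m then
        firstIntegral q Q v else 0) / m i
termination_by m => weight (transverseWeight a) m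

variable {a} (q : σ → MvPowerSeries σ k) (Q : PowerSeries k)

theorem coeff_firstIntegral_of_weight_eq_zero {m : σ →₀ ℕ}
    (h : weight (transverseWeight a) m = 0) :
    coeff m (firstIntegral a q Q) = PowerSeries.coeff (m a) Q := by
  rw [coeff_apply, firstIntegral, dif_pos h]

theorem axisRestrict_firstIntegral : axisRestrict a (firstIntegral a q Q) = Q := by
  ext t
  rw [coeff_axisRestrict, coeff_firstIntegral_of_weight_eq_zero _ _ (by simp),
    Finsupp.single_eq_same]

theorem exists_coeff_firstIntegral_eq [CharZero k] {m : σ →₀ ℕ}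
    (h : weight (transverseWeight a) m ≠ 0) :
    ∃ i m', i ≠ a ∧ m = m' + single i 1 ∧
      (m i : k) * coeff m (firstIntegral a q Q) =
        coeff m' (q i * pderiv k a (firstIntegral a q Q)) := by
  set T : MvPowerSeries σ k := fun v =>
    if weight (transverseWeight a) v < weight (transverseWeight a) m then
      firstIntegral a q Q v else 0
  obtain ⟨i, hi, hmi, hE⟩ : ∃ i, i ≠ a ∧ m i ≠ 0 ∧
      coeff m (firstIntegral a q Q) = coeff (m - single i 1) (q i * pderiv k a T) / m i :=
    have hspec := (exists_apply_ne_zero_of_weight_transverseWeight_ne_zero h).choose_spec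
    ⟨_, hspec.1, hspec.2, by rw [coeff_apply, firstIntegral, dif_neg h]⟩
  have hm := (Finsupp.sub_add_single_one_cancel hmi).symm
  refine ⟨i, m - single i 1, hi, hm, ?_⟩
  have hT : (weight (transverseWeight a) m : ℕ∞) ≤
      weightedOrder (transverseWeight a) (firstIntegral a q Q - T) := by
    refine nat_le_weightedOrder _ fun v hv => ?_
    rw [map_sub, sub_eq_zero]
    exact (if_pos hv).symm
  have hm' : (weight (transverseWeight a) (m - single i 1) : ℕ∞) <
      weightedOrder (transverseWeight a) (q i * pderiv k a (firstIntegral a q Q - T)) :=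
    (Nat.cast_lt.mpr (weight_transverseWeight_lt_of_eq_add_single hi hm)).trans_le
      (hT.trans (weightedOrder_le_weightedOrder_mul_pderiv_self _ _))
  rw [hE, mul_div_cancel₀ _ (by exact_mod_cast hmi), eq_comm, ← sub_eq_zero, ← map_sub,
    ← mul_sub, ← map_sub]
  exact coeff_eq_zero_of_lt_weightedOrder _ hm'

theorem isFirstIntegral_firstIntegral [CharZero k] {q : σ → MvPowerSeries σ k}
    (hq : IsInvolutive a q) (Q : PowerSeries k) : IsFirstIntegral a q (firstIntegral a q Q) := by
  set E := firstIntegral a q Q with hE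
  have hcomm : ∀ i j, i ≠ a → j ≠ a →
      pderiv k i (q j * pderiv k a E) - pderiv k j (q i * pderiv k a E) =
        q j * pderiv k a (pderiv k i E - q i * pderiv k a E) -
          q i * pderiv k a (pderiv k j E - q j * pderiv k a E) := by
    intro i j hi hj
    simp only [pderiv_mul, map_sub, pderiv_comm i a, pderiv_comm j a]
    linear_combination (-(hq i j hi hj)) * pderiv k a E
  suffices h : ∀ N : ℕ, ∀ i ≠ a,
      (N : ℕ∞) ≤ weightedOrder (transverseWeight a) (pderiv k i E - q i * pderiv k a E) from
    fun i hi => sub_eq_zero.mp (eq_zero_of_forall_natCast_le_weightedOrder _ fun N => h N i hi)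
  intro N
  induction N with
  | zero => simp
  | succ N ih =>
    intro i hi
    refine nat_le_weightedOrder _ fun m hm => ?_
    rcases Nat.lt_succ_iff_lt_or_eq.mp hm with hlt | hmN
    · exact coeff_eq_zero_of_lt_weightedOrder _ ((Nat.cast_lt.mpr hlt).trans_le (ih i hi))
    obtain ⟨j, m'', hj, hM, hEM⟩ :=
      exists_coeff_firstIntegral_eq (a := a) q Q (m := m + single i 1) (by simp [hi])
    rw [← hE] at hEM
    rw [map_sub, coeff_pderiv, sub_eq_zero]
    rcases eq_or_ne i j with rfl | hij
    · rw [← add_right_cancel hM] at hEM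
      simpa [mul_comm] using hEM
    -- The recursion used `∂ⱼ` at `m' + eᵢ + eⱼ`; `hcomm` and the induction hypothesis make
    -- this agree with the equation for `∂ᵢ`.
    obtain ⟨m', rfl, rfl⟩ := Finsupp.exists_add_single_of_add_single_eq hM hij
    have hsym : coeff m' (pderiv k i (q j * pderiv k a E)) =
        coeff m' (pderiv k j (q i * pderiv k a E)) := by
      rw [← sub_eq_zero, ← map_sub, hcomm i j hi hj, sub_eq_add_neg, ← neg_mul]
      refine coeff_eq_zero_of_lt_weightedOrder (transverseWeight a) ?_
      calc (weight (transverseWeight a) m' : ℕ∞)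
          < N := Nat.cast_lt.mpr (hmN ▸ weight_transverseWeight_lt_of_eq_add_single hj rfl)
        _ ≤ min _ _ := le_min ((ih i hi).trans (weightedOrder_le_weightedOrder_mul_pderiv_self _ _))
            ((ih j hj).trans (weightedOrder_le_weightedOrder_mul_pderiv_self _ _))
        _ ≤ _ := min_weightedOrder_le_add _
    simp only [coeff_pderiv, Finsupp.add_apply, Finsupp.single_eq_same,
      Finsupp.single_eq_of_ne hij, Finsupp.single_eq_of_ne hij.symm, add_zero] at hsym hEM ⊢
    push_cast at hsym hEM ⊢
    refine mul_left_cancel₀ (Nat.cast_add_one_ne_zero (R := k) (m' j)) ?_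
    linear_combination (m' i + 1 : k) * hEM + hsym

theorem IsFirstIntegral.pderiv_self_dvd [CharZero k] {q : σ → MvPowerSeries σ k}
    {f : MvPowerSeries σ k} (hf : IsFirstIntegral a q f) (hq : IsInvolutive a q)
    (hf₀ : constantCoeff f = 0) : pderiv k a f ∣ f := by
  obtain ⟨r, hr⟩ := PowerSeries.derivative_dvd_of_constantCoeff_eq_zero
    (F := axisRestrict a f) (by rwa [constantCoeff_axisRestrict])
  set φ := firstIntegral a q PowerSeries.X
  set ψ := firstIntegral a q r
  have hφ : IsFirstIntegral a q φ := isFirstIntegral_firstIntegral hq PowerSeries.X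
  have hψ : IsFirstIntegral a q ψ := isFirstIntegral_firstIntegral hq r
  have hφ₁ : axisRestrict a (pderiv k a φ) = 1 := by
    rw [axisRestrict_pderiv_self, axisRestrict_firstIntegral, PowerSeries.derivative_X]
  have hunit : IsUnit (pderiv k a φ) := by
    rw [isUnit_iff_constantCoeff, ← constantCoeff_axisRestrict, hφ₁, map_one]
    exact isUnit_one
  have hG : pderiv k a f * ψ - f * pderiv k a φ = 0 := by
    refine eq_zero_of_axisRestrict_eq_zero (a := a) (A := q) (B := fun i => pderiv k a (q i))
      (fun i hi => ?_) ?_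
    · simp only [map_sub, pderiv_mul, hf.pderiv_pderiv_self hi, hφ.pderiv_pderiv_self hi,
        hf i hi, hψ i hi]
      ring
    · rw [map_sub, map_mul, map_mul, axisRestrict_pderiv_self, axisRestrict_firstIntegral, hφ₁,
        ← hr, mul_one, sub_self]
  rw [← hunit.dvd_mul_right]
  exact ⟨ψ, (sub_eq_zero.mp hG).symm⟩

end Existence

end MvPowerSeries

theorem stmt_15 {k : Type} [Field k] [CharZero k] {n : ℕ}
    (f : MvPowerSeries (Fin (n + 1)) k) (hnu : ¬ IsUnit f)
    (hne : pderiv 0 f ≠ 0)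
    (hprinc : gradIdeal f = Ideal.span {pderiv 0 f}) :
    f ∈ Ideal.span {pderiv 0 f} := by
  simp only [gradIdeal, pderiv_eq_mvPowerSeries_pderiv] at hne hprinc ⊢
  have hq : ∀ i, ∃ qi, pderiv k i f = qi * pderiv k 0 f := fun i =>
    Ideal.mem_span_singleton'.mp (hprinc ▸ Ideal.subset_span ⟨i, rfl⟩) |>.imp fun _ h => h.symm
  choose q hq using hq
  have hf : IsFirstIntegral 0 q f := fun i _ => hq i
  have hf₀ : constantCoeff f = 0 := by
    contrapose! hnu
    exact isUnit_iff_constantCoeff.mpr hnu.isUnit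
  exact Ideal.mem_span_singleton.mpr (hf.pderiv_self_dvd (hf.isInvolutive hne) hf₀)
end
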